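/- In the IRL1 setting, for every k ∈ ℕ, F(x^k, ε^k) − F(x^{k+1}, ε^{k+1}) ≥ F(x^k, ε^k) − F(x^{k+1}, ε^k) ≥ (M − L_f/2)·‖x^k − x^{k+1}‖²; in particular the values F(x^k, ε^k) are monotonically nonincreasing in k. -/

import Mathlib

open Filter Topology

/-- The weight function `w(t, s) = p(|t| + s)^(p-1)`. -/
noncomputable def wfun (p t s : ℝ) : ℝ := p * (|t| + s) ^ (p - 1)

/-- The IRL1 setting (Algorithm 2.1 of the paper): fixed data `p ∈ (0,1)`, `λ > 0`,
`μ ∈ (0,1)`, a differentiable `f` with `Lf`-Lipschitz gradient (`Lf ≥ 0`), iterates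
`x^k`, positive parameters `ε^k` with `ε^{k+1} ≤ μ ε^k` componentwise, and for each `k`
a differentiable model `Q_k` with `∇Q_k(x^k) = ∇f(x^k)`, `M`-strongly convex with
`M > Lf/2` (strong convexity meaning `z ↦ Q_k z - (M/2)‖z‖²` is convex), `∇Q_k`
`L`-Lipschitz, such that `x^{k+1}` is a global minimizer of
`G(·; x^k, ε^k) = Q_k(·) + λ Σᵢ w(xᵢ^k, εᵢ^k)|·ᵢ|`. -/
structure IRL1 (n : ℕ) where
  p : ℝ
  lam : ℝ
  mu : ℝ
  Lf : ℝ
  M : ℝ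
  L : ℝ
  f : EuclideanSpace ℝ (Fin n) → ℝ
  x : ℕ → EuclideanSpace ℝ (Fin n)
  eps : ℕ → Fin n → ℝ
  Q : ℕ → EuclideanSpace ℝ (Fin n) → ℝ
  hp0 : 0 < p
  hp1 : p < 1
  hlam : 0 < lam
  hmu0 : 0 < mu
  hmu1 : mu < 1
  hLf : 0 ≤ Lf
  hM : Lf / 2 < M
  hf_diff : Differentiable ℝ f
  hf_lip : ∀ a b, ‖gradient f a - gradient f b‖ ≤ Lf * ‖a - b‖
  heps_pos : ∀ k i, 0 < eps k i
  heps_dec : ∀ k i, eps (k + 1) i ≤ mu * eps k i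
  hQ_diff : ∀ k, Differentiable ℝ (Q k)
  hQ_grad : ∀ k, gradient (Q k) (x k) = gradient f (x k)
  hQ_sconv : ∀ k, ConvexOn ℝ Set.univ (fun z => Q k z - M / 2 * ‖z‖ ^ 2)
  hQ_lip : ∀ k a b, ‖gradient (Q k) a - gradient (Q k) b‖ ≤ L * ‖a - b‖
  hmin : ∀ k, ∀ z : EuclideanSpace ℝ (Fin n),
    Q k (x (k + 1)) + lam * ∑ i, wfun p (x k i) (eps k i) * |x (k + 1) i|
      ≤ Q k z + lam * ∑ i, wfun p (x k i) (eps k i) * |z i|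

/-- The smoothed objective `F(x, ε) = f(x) + λ Σᵢ (|xᵢ| + εᵢ)^p`. -/
noncomputable def IRL1.Feps {n : ℕ} (S : IRL1 n)
    (z : EuclideanSpace ℝ (Fin n)) (e : Fin n → ℝ) : ℝ :=
  S.f z + S.lam * ∑ i, (|z i| + e i) ^ S.p

/-- The objective `F(x) = f(x) + λ Σᵢ |xᵢ|^p`. -/
noncomputable def IRL1.Fobj {n : ℕ} (S : IRL1 n) (z : EuclideanSpace ℝ (Fin n)) : ℝ :=
  S.f z + S.lam * ∑ i, |z i| ^ S.p

/-- The subproblem objective `G(z; x^k, ε^k)`. -/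
noncomputable def IRL1.G {n : ℕ} (S : IRL1 n) (k : ℕ)
    (z : EuclideanSpace ℝ (Fin n)) : ℝ :=
  S.Q k z + S.lam * ∑ i, wfun S.p (S.x k i) (S.eps k i) * |z i|

/-- The level set `{x : F(x) ≤ F(x⁰, ε⁰)}` is bounded. -/
def IRL1.LevelBounded {n : ℕ} (S : IRL1 n) : Prop :=
  Bornology.IsBounded {z : EuclideanSpace ℝ (Fin n) | S.Fobj z ≤ S.Feps (S.x 0) (S.eps 0)}

/-!
Write `x = xᵏ`, `y = xᵏ⁺¹`, `ε = εᵏ`. The descent lemma gives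
`f y ≤ f x + ⟪∇f x, y - x⟫ + (L_f/2)‖y - x‖²`, and since `∇Q_k x = ∇f x`, strong convexity of `Q_k`
bounds the linear term by `Q_k y - Q_k x - (M/2)‖y - x‖²`. Concavity of `s ↦ s ^ p` bounds the
change of the penalty by the change of the weighted `ℓ¹` term, so altogether
`F(y, ε) - F(x, ε) ≤ G y - G x - (M/2 - L_f/2)‖y - x‖²`. Finally `G` is `M`-strongly convex with
minimizer `y`, whence `G y + (M/2)‖y - x‖² ≤ G x`. Shrinking `ε` to `εᵏ⁺¹` only lowers `F`.
-/

open Set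

section StrongConvexity

variable {E : Type*} [NormedAddCommGroup E] [NormedSpace ℝ E] {s : Set E} {m : ℝ} {G : E → ℝ}
  {x y : E}

lemma StrongConvexOn.slope_add_le (hG : StrongConvexOn s m G) (hx : x ∈ s) (hy : y ∈ s)
    {t : ℝ} (ht₀ : 0 < t) (ht₁ : t ≤ 1) :
    t⁻¹ * (G (x + t • (y - x)) - G x) + (1 - t) * (m / 2 * ‖y - x‖ ^ 2) ≤ G y - G x := by
  have h := hG.2 hx hy (sub_nonneg.2 ht₁) ht₀.le (sub_add_cancel 1 t)
  rw [show (1 - t) • x + t • y = x + t • (y - x) by module, norm_sub_rev, smul_eq_mul,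
    smul_eq_mul] at h
  rw [← le_sub_iff_add_le, inv_mul_le_iff₀ ht₀]
  linarith

lemma add_le_of_forall_Ioo_add_one_sub_mul_le {a : ℝ → ℝ} {A c C : ℝ}
    (ha : Tendsto a (𝓝[>] 0) (𝓝 A)) (h : ∀ t ∈ Ioo (0 : ℝ) 1, a t + (1 - t) * c ≤ C) :
    A + c ≤ C := by
  have hc : Tendsto (fun t : ℝ ↦ (1 - t) * c) (𝓝[>] 0) (𝓝 c) := by
    have : ContinuousAt (fun t : ℝ ↦ (1 - t) * c) 0 := by fun_prop
    simpa using this.tendsto.mono_left nhdsWithin_le_nhds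
  refine le_of_tendsto (ha.add hc) ?_
  filter_upwards [Ioo_mem_nhdsGT one_pos] with t ht using h t ht

lemma StrongConvexOn.add_sq_le_of_isMinOn (hG : StrongConvexOn s m G) (hmin : IsMinOn G s x)
    (hx : x ∈ s) (hy : y ∈ s) : G x + m / 2 * ‖y - x‖ ^ 2 ≤ G y := by
  suffices 0 + m / 2 * ‖y - x‖ ^ 2 ≤ G y - G x by linarith
  refine add_le_of_forall_Ioo_add_one_sub_mul_le tendsto_const_nhds fun t ht ↦ ?_
  have hslope : 0 ≤ t⁻¹ * (G (x + t • (y - x)) - G x) :=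
    mul_nonneg (inv_nonneg.2 ht.1.le)
      (sub_nonneg.2 (hmin (hG.1.add_smul_sub_mem hx hy ⟨ht.1.le, ht.2.le⟩)))
  linarith [hG.slope_add_le hx hy ht.1 ht.2.le]

lemma StrongConvexOn.add_fderiv_add_sq_le {G' : E →L[ℝ] ℝ} (hG : StrongConvexOn s m G)
    (hd : HasFDerivAt G G' x) (hx : x ∈ s) (hy : y ∈ s) :
    G x + G' (y - x) + m / 2 * ‖y - x‖ ^ 2 ≤ G y := by
  suffices G' (y - x) + m / 2 * ‖y - x‖ ^ 2 ≤ G y - G x by linarith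
  have hline : HasDerivAt (fun t : ℝ ↦ x + t • (y - x)) (y - x) 0 := by
    simpa using ((hasDerivAt_id (0 : ℝ)).smul_const (y - x)).const_add x
  have hslope := (hd.comp_hasDerivAt_of_eq 0 hline (by simp)).tendsto_slope_zero_right
  simp only [zero_add, zero_smul, add_zero, smul_eq_mul, Function.comp_def] at hslope
  exact add_le_of_forall_Ioo_add_one_sub_mul_le hslope fun t ht ↦
    hG.slope_add_le hx hy ht.1 ht.2.le

lemma StrongConvexOn.add_convexOn {g : E → ℝ} (hG : StrongConvexOn s m G) (hg : ConvexOn ℝ s g) :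
    StrongConvexOn s m (G + g) := by
  have h := hG.add (uniformConvexOn_zero.2 hg)
  rwa [add_zero] at h

end StrongConvexity

lemma convexOn_sum_mul_abs {ι : Type*} [Fintype ι] {w : ι → ℝ} (hw : ∀ i, 0 ≤ w i) :
    ConvexOn ℝ univ fun z : EuclideanSpace ℝ ι ↦ ∑ i, w i * |z i| := by
  refine ⟨convex_univ, fun x _ y _ a b ha hb _ ↦ ?_⟩
  simp only [PiLp.add_apply, PiLp.smul_apply, smul_eq_mul, Finset.mul_sum,
    ← Finset.sum_add_distrib]
  refine Finset.sum_le_sum fun i _ ↦ ?_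
  calc w i * |a * x i + b * y i| ≤ w i * (|a * x i| + |b * y i|) :=
        mul_le_mul_of_nonneg_left (abs_add_le _ _) (hw i)
    _ = a * (w i * |x i|) + b * (w i * |y i|) := by
        rw [abs_mul, abs_mul, abs_of_nonneg ha, abs_of_nonneg hb]; ring

section Descent

variable {E : Type*} [NormedAddCommGroup E] [InnerProductSpace ℝ E] [CompleteSpace E]

lemma hasDerivAt_comp_add_smul_of_differentiable {f : E → ℝ} (hf : Differentiable ℝ f)
    (x δ : E) (t : ℝ) :
    HasDerivAt (fun t : ℝ ↦ f (x + t • δ)) (inner ℝ (gradient f (x + t • δ)) δ) t := by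
  have hline : HasDerivAt (fun t : ℝ ↦ x + t • δ) δ t := by
    simpa using ((hasDerivAt_id t).smul_const δ).const_add x
  simpa [Function.comp_def] using (hf _).hasGradientAt.hasFDerivAt.comp_hasDerivAt t hline

lemma le_add_inner_gradient_add_sq_of_lipschitz {f : E → ℝ} {L : ℝ} (hf : Differentiable ℝ f)
    (hlip : ∀ a b, ‖gradient f a - gradient f b‖ ≤ L * ‖a - b‖) (x y : E) :
    f y ≤ f x + inner ℝ (gradient f x) (y - x) + L / 2 * ‖y - x‖ ^ 2 := by
  set δ := y - x
  have hB (t : ℝ) :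
      HasDerivAt (fun t ↦ f x + t * inner ℝ (gradient f x) δ + L / 2 * t ^ 2 * ‖δ‖ ^ 2)
        (inner ℝ (gradient f x) δ + L * t * ‖δ‖ ^ 2) t := by
    have := (((hasDerivAt_id' t).mul_const (inner ℝ (gradient f x) δ)).const_add (f x)).add
      (((hasDerivAt_pow 2 t).const_mul (L / 2)).mul_const (‖δ‖ ^ 2))
    exact this.congr_deriv (by push_cast; ring)
  have hbound (t : ℝ) (ht : t ∈ Ico (0 : ℝ) 1) :
      inner ℝ (gradient f (x + t • δ)) δ ≤ inner ℝ (gradient f x) δ + L * t * ‖δ‖ ^ 2 := by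
    calc inner ℝ (gradient f (x + t • δ)) δ
        = inner ℝ (gradient f x) δ + inner ℝ (gradient f (x + t • δ) - gradient f x) δ := by
          rw [inner_sub_left]; ring
      _ ≤ inner ℝ (gradient f x) δ + L * ‖x + t • δ - x‖ * ‖δ‖ := by
          gcongr
          exact (real_inner_le_norm _ _).trans
            (mul_le_mul_of_nonneg_right (hlip _ _) (norm_nonneg δ))
      _ = inner ℝ (gradient f x) δ + L * t * ‖δ‖ ^ 2 := by
          rw [add_sub_cancel_left, norm_smul, Real.norm_of_nonneg ht.1]; ring
  have hφ := hasDerivAt_comp_add_smul_of_differentiable hf x δ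
  have := image_le_of_deriv_right_le_deriv_boundary
    (fun t _ ↦ (hφ t).continuousAt.continuousWithinAt) (fun t _ ↦ (hφ t).hasDerivWithinAt)
    (by simp) (fun t _ ↦ (hB t).continuousAt.continuousWithinAt)
    (fun t _ ↦ (hB t).hasDerivWithinAt) hbound (right_mem_Icc.2 zero_le_one)
  simpa [δ] using this

end Descent

/-- Bernoulli's inequality at `s = v / u - 1`. -/
lemma Real.rpow_le_rpow_add_mul_rpow_sub_one_mul_sub {p u v : ℝ} (hp₀ : 0 ≤ p) (hp₁ : p ≤ 1)
    (hu : 0 < u) (hv : 0 ≤ v) : v ^ p ≤ u ^ p + p * u ^ (p - 1) * (v - u) := by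
  have hs : -1 ≤ (v - u) / u := by rw [le_div_iff₀ hu]; linarith
  have h := rpow_one_add_le_one_add_mul_self hs hp₀ hp₁
  rw [show 1 + (v - u) / u = v / u by field_simp; ring, Real.div_rpow hv hu.le,
    div_le_iff₀ (Real.rpow_pos_of_pos hu p)] at h
  rw [Real.rpow_sub_one hu.ne']
  calc v ^ p ≤ (1 + p * ((v - u) / u)) * u ^ p := h
    _ = u ^ p + p * (u ^ p / u) * (v - u) := by ring

namespace IRL1

variable {n : ℕ} (S : IRL1 n)

lemma wfun_nonneg (k : ℕ) (i : Fin n) : 0 ≤ wfun S.p (S.x k i) (S.eps k i) :=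
  mul_nonneg S.hp0.le (Real.rpow_nonneg (by linarith [abs_nonneg (S.x k i), S.heps_pos k i]) _)

lemma strongConvexOn_G (k : ℕ) : StrongConvexOn univ S.M (S.G k) :=
  (strongConvexOn_iff_convex.2 (S.hQ_sconv k)).add_convexOn
    ((convexOn_sum_mul_abs (S.wfun_nonneg k)).smul S.hlam.le)

lemma isMinOn_G (k : ℕ) : IsMinOn (S.G k) univ (S.x (k + 1)) :=
  fun z _ ↦ S.hmin k z

lemma G_add_sq_le (k : ℕ) :
    S.G k (S.x (k + 1)) + S.M / 2 * ‖S.x (k + 1) - S.x k‖ ^ 2 ≤ S.G k (S.x k) := by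
  simpa [norm_sub_rev] using
    (S.strongConvexOn_G k).add_sq_le_of_isMinOn (S.isMinOn_G k) (mem_univ _) (mem_univ (S.x k))

lemma Q_add_inner_gradient_add_sq_le (k : ℕ) (y : EuclideanSpace ℝ (Fin n)) :
    S.Q k (S.x k) + inner ℝ (gradient S.f (S.x k)) (y - S.x k) + S.M / 2 * ‖y - S.x k‖ ^ 2
      ≤ S.Q k y := by
  have hd := ((S.hQ_diff k) (S.x k)).hasGradientAt.hasFDerivAt
  rw [S.hQ_grad k] at hd
  simpa using (strongConvexOn_iff_convex.2 (S.hQ_sconv k)).add_fderiv_add_sq_le hd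
    (mem_univ _) (mem_univ y)

lemma sum_rpow_le_add_sum_wfun_mul (k : ℕ) (y : EuclideanSpace ℝ (Fin n)) :
    ∑ i, (|y i| + S.eps k i) ^ S.p ≤ ∑ i, (|S.x k i| + S.eps k i) ^ S.p
      + (∑ i, wfun S.p (S.x k i) (S.eps k i) * |y i|
        - ∑ i, wfun S.p (S.x k i) (S.eps k i) * |S.x k i|) := by
  rw [← Finset.sum_sub_distrib, ← Finset.sum_add_distrib]
  refine Finset.sum_le_sum fun i _ ↦ ?_
  have h := Real.rpow_le_rpow_add_mul_rpow_sub_one_mul_sub S.hp0.le S.hp1.le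
    (by linarith [abs_nonneg (S.x k i), S.heps_pos k i] : 0 < |S.x k i| + S.eps k i)
    (by linarith [abs_nonneg (y i), S.heps_pos k i] : 0 ≤ |y i| + S.eps k i)
  rw [wfun]
  linarith

lemma Feps_succ_add_le (k : ℕ) :
    S.Feps (S.x (k + 1)) (S.eps k) + (S.M - S.Lf / 2) * ‖S.x k - S.x (k + 1)‖ ^ 2
      ≤ S.Feps (S.x k) (S.eps k) := by
  have hf := le_add_inner_gradient_add_sq_of_lipschitz S.hf_diff S.hf_lip (S.x k) (S.x (k + 1))
  have hQ := S.Q_add_inner_gradient_add_sq_le k (S.x (k + 1))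
  have hG := S.G_add_sq_le k
  have hpen := mul_le_mul_of_nonneg_left (S.sum_rpow_le_add_sum_wfun_mul k (S.x (k + 1)))
    S.hlam.le
  rw [norm_sub_rev]
  simp only [Feps, G] at hG ⊢
  linarith

lemma Feps_le_Feps_of_le (z : EuclideanSpace ℝ (Fin n)) {e e' : Fin n → ℝ}
    (he' : ∀ i, 0 ≤ e' i) (h : e' ≤ e) : S.Feps z e' ≤ S.Feps z e := by
  unfold Feps
  gcongr with i
  · exact S.hlam.le
  · linarith [abs_nonneg (z i), he' i]
  · exact S.hp0.le
  · exact h i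

lemma eps_succ_le (k : ℕ) : S.eps (k + 1) ≤ S.eps k := fun i ↦
  (S.heps_dec k i).trans (mul_le_of_le_one_left (S.heps_pos k i).le S.hmu1.le)

end IRL1

/-- In the IRL1 setting, for every `k`,
`F(x^k, ε^k) - F(x^{k+1}, ε^{k+1}) ≥ F(x^k, ε^k) - F(x^{k+1}, ε^k) ≥ (M - Lf/2)‖x^k - x^{k+1}‖²`;
in particular `F(x^k, ε^k)` is monotonically nonincreasing in `k`. -/
theorem stmt4 {n : ℕ} (S : IRL1 n) :
    (∀ k : ℕ,
      S.Feps (S.x k) (S.eps k) - S.Feps (S.x (k + 1)) (S.eps (k + 1)) ≥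
        S.Feps (S.x k) (S.eps k) - S.Feps (S.x (k + 1)) (S.eps k) ∧
      S.Feps (S.x k) (S.eps k) - S.Feps (S.x (k + 1)) (S.eps k) ≥
        (S.M - S.Lf / 2) * ‖S.x k - S.x (k + 1)‖ ^ 2) ∧
    Antitone (fun k => S.Feps (S.x k) (S.eps k)) := by
  have hε (k : ℕ) := S.Feps_le_Feps_of_le (S.x (k + 1)) (fun i ↦ (S.heps_pos (k + 1) i).le)
    (S.eps_succ_le k)
  have hdesc := S.Feps_succ_add_le
  have hgap (k : ℕ) : 0 ≤ (S.M - S.Lf / 2) * ‖S.x k - S.x (k + 1)‖ ^ 2 :=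
    mul_nonneg (by linarith [S.hM]) (sq_nonneg _)
  refine ⟨fun k ↦ ⟨by linarith [hε k], by linarith [hdesc k]⟩, antitone_nat_of_succ_le fun k ↦ ?_⟩
  linarith [hε k, hdesc k, hgap k]
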